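/- Let x ∈ {0,1}^n with |x|_0 = i, let p ∈ [0,1], and let X_1, …, X_m be i.i.d. copies of the one-bit-noise fitness of x on OneMax, where m = 2n^3 + 1. If both p·i/n ≤ 1/2 − c/n and p·(n−i)/n ≤ 1/2 − c/n for a constant c > 0, then the median of X_1, …, X_m equals n − i with probability at least 1 − 4·exp(−2c²n⁴/m). -/

import Mathlib

/-!
The median of `2k + 1` values equals `d` as soon as at most `k` of them lie below `d` and at
most `k` lie above it. A noisy sample lies below `n - i` with probability `p(n - i)/n` and above
it with probability `p·i/n`, both at most `1/2 - c/n`. With `k = n³` the expected number of samples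
on either side is therefore at least `c n²` below `k + 1`, and Hoeffding's inequality for the
indicators of the `m = 2n³ + 1` independent samples bounds each of the two bad events by
`exp(-2c²n⁴/m)`.
-/

open MeasureTheory ENNReal

/-- The median of `m` real values: the `((m+1)/2)`-th smallest value for odd `m`, and the
average of the `(m/2)`-th and `(m/2+1)`-th smallest values for even `m`. -/
noncomputable def medianOf {m : ℕ} (v : Fin m → ℝ) : ℝ :=
  let s := List.insertionSort (· ≤ ·) (List.ofFn v)
  if m % 2 = 1 then s.getD ((m - 1) / 2) 0
  else (s.getD (m / 2 - 1) 0 + s.getD (m / 2) 0) / 2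

/-- One-bit noise on OneMax with parameter `p`, for a solution `x ∈ {0,1}ⁿ` with
`|x|₀ = i` zero-bits: the noisy fitness equals `n - i - 1` with probability `p(n-i)/n`,
`n - i` with probability `1 - p`, and `n - i + 1` with probability `p·i/n`. -/
noncomputable def oneBitNoiseDist (n : ℕ) (p : ℝ) (i : ℕ) : Measure ℝ :=
  ENNReal.ofReal (p * ((n : ℝ) - i) / n) • Measure.dirac ((n : ℝ) - i - 1)
    + ENNReal.ofReal (1 - p) • Measure.dirac ((n : ℝ) - i)
    + ENNReal.ofReal (p * i / n) • Measure.dirac ((n : ℝ) - i + 1)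

open ProbabilityTheory Finset Real

namespace List.SortedLE

variable {α : Type*} [LinearOrder α] {l : List α} {k : ℕ} {d : α}

lemma succ_le_countP_lt (hl : l.SortedLE) (hk : k < l.length) (h : l[k] < d) :
    k + 1 ≤ l.countP (· < d) := by
  have htake : (l.take (k + 1)).countP (· < d) = k + 1 := by
    rw [countP_eq_length.2, length_take, min_eq_left hk]
    intro a ha
    obtain ⟨j, hj, rfl⟩ := mem_take_iff_getElem.1 ha
    simpa using (hl.getElem_le_getElem_of_le (by omega)).trans_lt h
  exact htake ▸ (take_sublist _ _).countP_le

lemma length_sub_le_countP_gt (hl : l.SortedLE) (hk : k < l.length) (h : d < l[k]) :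
    l.length - k ≤ l.countP (d < ·) := by
  have hdrop : (l.drop k).countP (d < ·) = l.length - k := by
    rw [countP_eq_length.2, length_drop]
    intro a ha
    obtain ⟨j, hj, rfl⟩ := mem_drop_iff_getElem.1 ha
    simpa using h.trans_le (hl.getElem_le_getElem_of_le (by omega))
  exact hdrop ▸ (drop_sublist _ _).countP_le

end List.SortedLE

lemma List.countP_ofFn {α : Type*} {m : ℕ} (v : Fin m → α) (p : α → Prop) [DecidablePred p] :
    (List.ofFn v).countP (fun x => decide (p x)) = #{j | p (v j)} := by
  rw [← Multiset.coe_countP, ← Fin.univ_val_map, Multiset.countP_map]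
  rfl

lemma medianOf_eq_of_card_lt_le_of_card_gt_le {k : ℕ} {v : Fin (2 * k + 1) → ℝ} {d : ℝ}
    (hlt : #{j | v j < d} ≤ k) (hgt : #{j | d < v j} ≤ k) : medianOf v = d := by
  set s := (List.ofFn v).insertionSort (· ≤ ·)
  have hperm : s.Perm (List.ofFn v) := List.perm_insertionSort _ _
  have hs : s.SortedLE := List.sortedLE_insertionSort
  have hlen : s.length = 2 * k + 1 := by rw [hperm.length_eq, List.length_ofFn]
  have hk : k < s.length := by omega
  have hmed : medianOf v = s[k] := by
    rw [medianOf, if_pos (by omega), show (2 * k + 1 - 1) / 2 = k by omega,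
      List.getD_eq_getElem _ _ hk]
  rw [← List.countP_ofFn v (· < d), ← hperm.countP_eq] at hlt
  rw [← List.countP_ofFn v (d < ·), ← hperm.countP_eq] at hgt
  rw [hmed]
  refine le_antisymm (not_lt.1 fun h => ?_) (not_lt.1 fun h => ?_)
  · have := hs.length_sub_le_countP_gt (by omega) h
    omega
  · have := hs.succ_le_countP_lt (by omega) h
    omega

section OneBitNoise

variable {n i : ℕ} {p : ℝ}

lemma oneBitNoiseDist_apply (s : Set ℝ) : oneBitNoiseDist n p i s =
    ENNReal.ofReal (p * ((n : ℝ) - i) / n) * s.indicator 1 ((n : ℝ) - i - 1)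
      + ENNReal.ofReal (1 - p) * s.indicator 1 ((n : ℝ) - i)
      + ENNReal.ofReal (p * i / n) * s.indicator 1 ((n : ℝ) - i + 1) := by
  simp [oneBitNoiseDist, Measure.dirac_apply]

lemma isProbabilityMeasure_oneBitNoiseDist (hn : 0 < n) (hi : i ≤ n) (hp0 : 0 ≤ p)
    (hp1 : p ≤ 1) : IsProbabilityMeasure (oneBitNoiseDist n p i) := by
  have hN : (0 : ℝ) < n := Nat.cast_pos.2 hn
  have hni : (i : ℝ) ≤ n := Nat.cast_le.2 hi
  constructor
  rw [oneBitNoiseDist_apply]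
  simp only [Set.indicator_univ, Pi.one_apply, mul_one]
  rw [← ENNReal.ofReal_add (by positivity) (by linarith),
    ← ENNReal.ofReal_add (by positivity) (by positivity), ← ENNReal.ofReal_one]
  congr 1
  field_simp
  ring

lemma oneBitNoiseDist_real_Iio (hi : i ≤ n) (hp0 : 0 ≤ p) :
    (oneBitNoiseDist n p i).real (Set.Iio ((n : ℝ) - i)) = p * ((n : ℝ) - i) / n := by
  have hq : 0 ≤ p * ((n : ℝ) - i) / n :=
    div_nonneg (mul_nonneg hp0 (sub_nonneg.2 (Nat.cast_le.2 hi))) n.cast_nonneg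
  simp [measureReal_def, oneBitNoiseDist_apply, hq]

lemma oneBitNoiseDist_real_Ioi (hp0 : 0 ≤ p) :
    (oneBitNoiseDist n p i).real (Set.Ioi ((n : ℝ) - i)) = p * i / n := by
  have hq : 0 ≤ p * i / n := by positivity
  simp [measureReal_def, oneBitNoiseDist_apply, hq]

end OneBitNoise

lemma measureReal_card_filter_ge_le {α ι : Type*} [MeasurableSpace α] [Fintype ι]
    (μ : Measure α) [IsProbabilityMeasure μ] (P : α → Prop) [DecidablePred P]
    (hP : MeasurableSet {x | P x}) {ε : ℝ} (hε : 0 ≤ ε) :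
    (Measure.pi fun _ : ι => μ).real
        {v | Fintype.card ι * μ.real {x | P x} + ε ≤ #{j | P (v j)}} ≤
      exp (-2 * ε ^ 2 / Fintype.card ι) := by
  set q := μ.real {x | P x}
  set Y : α → ℝ := {x | P x}.indicator 1
  have hY : Measurable Y := measurable_const.indicator hP
  have hmean : μ[Y] = q := integral_indicator_one hP
  have hsub : HasSubgaussianMGF (fun a => Y a - q) ((‖(1:ℝ) - 0‖₊ / 2) ^ 2) μ := by
    rw [← hmean]
    refine hasSubgaussianMGF_of_mem_Icc hY.aemeasurable (ae_of_all _ fun a => ?_)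
    by_cases h : P a <;> simp [Y, h]
  have hsub_eval (j : ι) : HasSubgaussianMGF (fun v : ι → α => Y (v j) - q)
      ((‖(1:ℝ) - 0‖₊ / 2) ^ 2) (Measure.pi fun _ => μ) :=
    HasSubgaussianMGF.of_map (measurable_pi_apply j).aemeasurable
      (by rwa [(measurePreserving_eval (fun _ : ι => μ) j).map_eq])
  have hindep : iIndepFun (fun j (v : ι → α) => Y (v j) - q) (Measure.pi fun _ => μ) :=
    iIndepFun_pi (X := fun _ a => Y a - q) fun _ => (hY.sub_const _).aemeasurable
  have hsum (v : ι → α) : ∑ j, (Y (v j) - q) = #{j | P (v j)} - Fintype.card ι * q := by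
    rw [Finset.sum_sub_distrib, Finset.natCast_card_filter]
    simp [Y, Set.indicator_apply]
  convert HasSubgaussianMGF.measure_sum_ge_le_of_iIndepFun hindep (s := univ)
    (fun j _ => hsub_eval j) hε using 2
  · ext v
    simp only [Set.mem_ofPred_eq, hsum]
    constructor <;> intro h <;> linarith
  · simp only [sum_const, card_univ, nsmul_eq_mul, nnnorm_one, sub_zero, NNReal.coe_mul,
      NNReal.coe_natCast, NNReal.coe_pow, NNReal.coe_div, NNReal.coe_one, NNReal.coe_ofNat]
    ring

lemma measureReal_pi_majority_le {α : Type*} [MeasurableSpace α] (μ : Measure α)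
    [IsProbabilityMeasure μ] (P : α → Prop) [DecidablePred P] (hP : MeasurableSet {x | P x})
    {n : ℕ} (hn : 0 < n) {c : ℝ} (hc : 0 ≤ c) (hq : μ.real {x | P x} ≤ 1 / 2 - c / n) :
    (Measure.pi fun _ : Fin (2 * n ^ 3 + 1) => μ).real {v | n ^ 3 + 1 ≤ #{j | P (v j)}} ≤
      exp (-2 * c ^ 2 * (n : ℝ) ^ 4 / (2 * (n : ℝ) ^ 3 + 1)) := by
  have hN : (0 : ℝ) < n := Nat.cast_pos.2 hn
  have hmean : (2 * (n : ℝ) ^ 3 + 1) * μ.real {x | P x} + c * n ^ 2 ≤ n ^ 3 + 1 := by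
    have : (2 * (n : ℝ) ^ 3 + 1) * (c / n) = 2 * c * n ^ 2 + c / n := by field_simp
    nlinarith [mul_le_mul_of_nonneg_left hq (by positivity : (0 : ℝ) ≤ 2 * n ^ 3 + 1),
      div_nonneg hc hN.le]
  calc _ ≤ (Measure.pi fun _ : Fin (2 * n ^ 3 + 1) => μ).real
        {v | Fintype.card (Fin (2 * n ^ 3 + 1)) * μ.real {x | P x} + c * n ^ 2
          ≤ #{j | P (v j)}} := by
        refine measureReal_mono fun v hv => ?_
        simp only [Set.mem_ofPred_eq, Fintype.card_fin] at hv ⊢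
        push_cast
        exact hmean.trans (by exact_mod_cast hv)
    _ ≤ exp (-2 * (c * n ^ 2) ^ 2 / Fintype.card (Fin (2 * n ^ 3 + 1))) :=
        measureReal_card_filter_ge_le μ P hP (by positivity)
    _ = exp (-2 * c ^ 2 * (n : ℝ) ^ 4 / (2 * (n : ℝ) ^ 3 + 1)) := by
        rw [Fintype.card_fin]
        push_cast
        ring_nf

lemma ofReal_one_sub_le_measure_of_compl_subset {Ω : Type*} [MeasurableSpace Ω] (ν : Measure Ω)
    [IsProbabilityMeasure ν] {s t u : Set Ω} (h : sᶜ ⊆ t ∪ u) :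
    ENNReal.ofReal (1 - (ν.real t + ν.real u)) ≤ ν s := by
  rw [← ofReal_measureReal]
  refine ENNReal.ofReal_le_ofReal ?_
  have hcover : 1 ≤ ν.real s + ν.real sᶜ := by
    simpa using measureReal_union_le (μ := ν) s sᶜ
  linarith [(measureReal_mono (μ := ν) h).trans (measureReal_union_le t u)]

theorem median_onebit_noise_exact_general (n i : ℕ) (hn : 0 < n) (hi : i ≤ n)
    (p : ℝ) (hp0 : 0 ≤ p) (c : ℝ) (hc : 0 < c)
    (h1 : p * i / n ≤ 1 / 2 - c / n)
    (h2 : p * ((n : ℝ) - i) / n ≤ 1 / 2 - c / n) :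
    ENNReal.ofReal (1 - 4 * Real.exp (-2 * c ^ 2 * (n : ℝ) ^ 4 / (2 * (n : ℝ) ^ 3 + 1))) ≤
      (Measure.pi fun _ : Fin (2 * n ^ 3 + 1) => oneBitNoiseDist n p i)
        {v | medianOf v = (n : ℝ) - i} := by
  have hp1 : p ≤ 1 := by
    have : p * i / n + p * ((n : ℝ) - i) / n = p := by field_simp; ring
    nlinarith [div_pos hc (Nat.cast_pos.2 hn : (0 : ℝ) < n)]
  have := isProbabilityMeasure_oneBitNoiseDist hn hi hp0 hp1
  set d : ℝ := (n : ℝ) - i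
  have hbelow := measureReal_pi_majority_le (oneBitNoiseDist n p i) (· < d) measurableSet_Iio hn
    hc.le ((oneBitNoiseDist_real_Iio hi hp0).trans_le h2)
  have habove := measureReal_pi_majority_le (oneBitNoiseDist n p i) (d < ·) measurableSet_Ioi hn
    hc.le ((oneBitNoiseDist_real_Ioi hp0).trans_le h1)
  refine le_trans (ENNReal.ofReal_le_ofReal ?_) (ofReal_one_sub_le_measure_of_compl_subset _
    (t := {v | n ^ 3 + 1 ≤ #{j | v j < d}}) (u := {v | n ^ 3 + 1 ≤ #{j | d < v j}}) ?_)
  · linarith [exp_pos (-2 * c ^ 2 * (n : ℝ) ^ 4 / (2 * (n : ℝ) ^ 3 + 1))]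
  · intro v hv
    by_contra hmaj
    simp only [Set.mem_union, Set.mem_ofPred_eq, not_or, not_le] at hmaj
    exact hv (medianOf_eq_of_card_lt_le_of_card_gt_le (by omega) (by omega))

/-- Let `X₁, …, X_m` be i.i.d. copies of the one-bit-noise fitness of a solution with `i`
zero-bits, where `m = 2n³ + 1`. If both `p·i/n ≤ 1/2 - c/n` and `p(n-i)/n ≤ 1/2 - c/n` for a
constant `c > 0`, then the median of `X₁, …, X_m` equals `n - i` with probability at least
`1 - 4·exp(-2c²n⁴/m)`. -/
theorem median_onebit_noise_exact (n i : ℕ) (hn : 0 < n) (hi : i ≤ n)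
    (p : ℝ) (hp0 : 0 ≤ p) (hp1 : p ≤ 1) (c : ℝ) (hc : 0 < c)
    (h1 : p * i / n ≤ 1 / 2 - c / n)
    (h2 : p * ((n : ℝ) - i) / n ≤ 1 / 2 - c / n) :
    ENNReal.ofReal (1 - 4 * Real.exp (-2 * c ^ 2 * (n : ℝ) ^ 4 / (2 * (n : ℝ) ^ 3 + 1))) ≤
      (Measure.pi fun _ : Fin (2 * n ^ 3 + 1) => oneBitNoiseDist n p i)
        {v | medianOf v = (n : ℝ) - i} :=
  median_onebit_noise_exact_general n i hn hi p hp0 c hc h1 h2
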